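/- arXiv:2503.22650 — 4 statements merged into one kernel-verified Lean document; each statement's English description precedes it below -/
import Mathlib

section
/- Let n ≥ 2 and let S be an n×n×n tensor with supp(S) ⊆ Γₙ. Write W(S) for the n×(n−1) matrix with W(S)_{i,k} = S_{n+1−i,i,k} (i ∈ [n], k ∈ [n−1]) and a_i(S) = S_{n−i,i,n} (i ∈ [n−1]). Suppose a_i(S) ≠ 0 for every i ∈ [n−1] and any n−1 of the n rows of W(S) are linearly independent. Let S₀ be the n×n×n tensor with supp(S₀) ⊆ Γₙ determined by a_i(S₀) = 1 for all i ∈ [n−1] and W(S₀) having rows e₁ᵀ, …, e_{n−1}ᵀ and last row (1,1,…,1). Then S is GL-equivalent to S₀: there exist invertible g₁,g₂,g₃ ∈ GLₙ(ℂ) with (g₁,g₂,g₃)·S = S₀. -/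
open scoped BigOperators

namespace NonFreePaper

/-- A tensor of format `a × b × c` over `ℂ`. -/
abbrev Tensor (a b c : ℕ) := Fin a → Fin b → Fin c → ℂ

variable {a b c : ℕ}

/-- The action of a triple of matrices on a tensor. -/
noncomputable def actT (g₁ : Matrix (Fin a) (Fin a) ℂ) (g₂ : Matrix (Fin b) (Fin b) ℂ)
    (g₃ : Matrix (Fin c) (Fin c) ℂ) (T : Tensor a b c) : Tensor a b c :=
  fun i j k => ∑ i', ∑ j', ∑ k', g₁ i i' * g₂ j j' * g₃ k k' * T i' j' k'

/-- The support of a tensor. -/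
def supp (T : Tensor a b c) : Set (Fin a × Fin b × Fin c) :=
  {p | T p.1 p.2.1 p.2.2 ≠ 0}

/-- A set of index triples is free if any two distinct elements differ in at
least two coordinates. -/
def IsFreeSet (S : Set (Fin a × Fin b × Fin c)) : Prop :=
  ∀ p ∈ S, ∀ q ∈ S, p ≠ q →
    2 ≤ (if p.1 = q.1 then 0 else 1) + (if p.2.1 = q.2.1 then 0 else 1)
        + (if p.2.2 = q.2.2 then (0 : ℕ) else 1)

/-- A tensor is free if some basis change gives it free support. -/
noncomputable def IsFree (T : Tensor a b c) : Prop :=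
  ∃ (g₁ : Matrix (Fin a) (Fin a) ℂ) (g₂ : Matrix (Fin b) (Fin b) ℂ)
    (g₃ : Matrix (Fin c) (Fin c) ℂ),
      IsUnit g₁ ∧ IsUnit g₂ ∧ IsUnit g₃ ∧ IsFreeSet (supp (actT g₁ g₂ g₃ T))

/-- The GL-orbit of a tensor. -/
noncomputable def orbitGL (T : Tensor a b c) : Set (Tensor a b c) :=
  {S | ∃ (g₁ : Matrix (Fin a) (Fin a) ℂ) (g₂ : Matrix (Fin b) (Fin b) ℂ)
    (g₃ : Matrix (Fin c) (Fin c) ℂ),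
      IsUnit g₁ ∧ IsUnit g₂ ∧ IsUnit g₃ ∧ actT g₁ g₂ g₃ T = S}

/-- The squared ℓ₂-norm of a tensor. -/
noncomputable def tnormSq (T : Tensor a b c) : ℝ :=
  ∑ i, ∑ j, ∑ k, Complex.normSq (T i j k)

/-- First component of the moment map. -/
noncomputable def mu1 (T : Tensor a b c) : Matrix (Fin a) (Fin a) ℂ :=
  Matrix.of fun i i' => ((tnormSq T : ℂ))⁻¹ * ∑ j, ∑ k, (starRingEnd ℂ) (T i j k) * T i' j k

/-- Second component of the moment map. -/
noncomputable def mu2 (T : Tensor a b c) : Matrix (Fin b) (Fin b) ℂ :=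
  Matrix.of fun j j' => ((tnormSq T : ℂ))⁻¹ * ∑ i, ∑ k, (starRingEnd ℂ) (T i j k) * T i j' k

/-- Third component of the moment map. -/
noncomputable def mu3 (T : Tensor a b c) : Matrix (Fin c) (Fin c) ℂ :=
  Matrix.of fun k k' => ((tnormSq T : ℂ))⁻¹ * ∑ i, ∑ j, (starRingEnd ℂ) (T i j k) * T i j k'

/-- Squared norm ‖μ(T)‖² (sum of the squared Frobenius norms of the components). -/
noncomputable def muNormSq (T : Tensor a b c) : ℝ :=
  (∑ i, ∑ i', Complex.normSq (mu1 T i i')) + (∑ j, ∑ j', Complex.normSq (mu2 T j j'))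
    + (∑ k, ∑ k', Complex.normSq (mu3 T k k'))

/-- The norm ‖μ(T)‖. -/
noncomputable def muNorm (T : Tensor a b c) : ℝ := Real.sqrt (muNormSq T)

/-- `Γₙ`: the set of (0-based) triples whose 1-based version `(i,j,k)` satisfies
`k ≤ n−1` and `i+j = n+1`, or `k = n` and `i+j = n`. -/
def Gamma (n : ℕ) : Set (Fin n × Fin n × Fin n) :=
  {p | (p.2.2.val + 1 < n ∧ p.1.val + p.2.1.val + 1 = n) ∨
       (p.2.2.val + 1 = n ∧ p.1.val + p.2.1.val + 2 = n)}
/-- The `n × (n−1)` matrix `W(S)` with `W(S)_{i,k} = S_{n+1−i,i,k}`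
(1-based indices). -/
def Wmat {n : ℕ} (S : Tensor n n n) : Matrix (Fin n) (Fin (n - 1)) ℂ :=
  Matrix.of fun i k =>
    S ⟨n - 1 - i.val, by have := i.isLt; omega⟩ i ⟨k.val, by have := k.isLt; omega⟩

/-- The vector `a(S)` with `a_i(S) = S_{n−i,i,n}` for `i ∈ [n−1]`
(1-based indices). -/
def avec {n : ℕ} (S : Tensor n n n) : Fin (n - 1) → ℂ := fun i =>
  S ⟨n - 2 - i.val, by have := i.isLt; omega⟩ ⟨i.val, by have := i.isLt; omega⟩
    ⟨n - 1, by have := i.isLt; omega⟩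

/-- The tensor `S₀` with support in `Γₙ`, `a_i(S₀) = 1` for all `i ∈ [n−1]`, and
`W(S₀)` having rows `e₁ᵀ, …, e_{n−1}ᵀ` and last row `(1,…,1)`. -/
def S0 (n : ℕ) : Tensor n n n := fun i j k =>
  if k.val + 1 < n ∧ i.val + j.val + 1 = n ∧ (j.val = k.val ∨ j.val + 1 = n) then 1
  else if k.val + 1 = n ∧ i.val + j.val + 2 = n then 1
  else 0


section Aux

/-- Existence of the scaling chain `u, v`. -/
lemma exists_uv {m : ℕ} (lam : Fin (m+1) → ℂ) (aS : Fin m → ℂ)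
    (hlam : ∀ j, lam j ≠ 0) (haS : ∀ j, aS j ≠ 0) :
    ∃ u v : Fin (m+1) → ℂ, (∀ i, u i ≠ 0) ∧ (∀ j, v j ≠ 0) ∧
      (∀ j : Fin (m+1), u ⟨m - j.val, by omega⟩ * v j = lam j) ∧
      (∀ j : Fin m, u ⟨m - 1 - j.val, by omega⟩ * v j.castSucc * aS j = 1) := by
  set lam' : ℕ → ℂ := fun t => if h : t < m+1 then lam ⟨t, h⟩ else 1 with hlam'
  set a' : ℕ → ℂ := fun t => if h : t < m then aS ⟨t, h⟩ else 1 with ha'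
  set v' : ℕ → ℂ := fun jv => ∏ t ∈ Finset.range jv, (lam' (t+1) * a' t) with hv'
  have hlam'ne : ∀ t, lam' t ≠ 0 := by
    intro t; rw [hlam']; dsimp only; split
    · exact hlam _
    · exact one_ne_zero
  have ha'ne : ∀ t, a' t ≠ 0 := by
    intro t; rw [ha']; dsimp only; split
    · exact haS _
    · exact one_ne_zero
  have hv'ne : ∀ t, v' t ≠ 0 := by
    intro t; rw [hv']; dsimp only
    exact Finset.prod_ne_zero_iff.mpr fun i _ => mul_ne_zero (hlam'ne _) (ha'ne _)
  refine ⟨fun i => lam' (m - i.val) / v' (m - i.val), fun j => v' j.val, ?_, ?_, ?_, ?_⟩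
  · intro i; exact div_ne_zero (hlam'ne _) (hv'ne _)
  · intro j; exact hv'ne _
  · intro j
    have h1 : m - (m - j.val) = j.val := by omega
    dsimp only
    rw [h1, div_mul_cancel₀ _ (hv'ne _)]
    rw [hlam']; dsimp only
    rw [dif_pos j.isLt]
  · intro j
    have h1 : m - (m - 1 - j.val) = j.val + 1 := by omega
    dsimp only
    rw [h1, Fin.coe_castSucc]
    have h2 : v' (j.val + 1) = v' j.val * (lam' (j.val+1) * a' j.val) := by
      rw [hv']; exact Finset.prod_range_succ _ _
    have h3 : a' j.val = aS j := by
      rw [ha']; dsimp only; rw [dif_pos j.isLt]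
    rw [h2, h3, div_mul_eq_mul_div, div_mul_eq_mul_div,
      div_eq_one_iff_eq (mul_ne_zero (hv'ne _) (mul_ne_zero (hlam'ne _) (haS _)))]
    ring

/-- Existence of `lam` and `H`. -/
lemma exists_lamH {m : ℕ} (W : Fin (m+1) → Fin m → ℂ)
    (hli : LinearIndependent ℂ (fun j : {j : Fin (m+1) // j ≠ Fin.last m} => W j.1))
    (c : Fin (m+1) → ℂ) (hc : ∀ j, c j ≠ 0)
    (hrel : ∑ j, c j • W j = 0) :
    ∃ (lam : Fin (m+1) → ℂ) (H : Matrix (Fin m) (Fin m) ℂ),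
      (∀ j, lam j ≠ 0) ∧ IsUnit H ∧
      (∀ k j : Fin m, lam j.castSucc * ∑ k', H k k' * W j.castSucc k'
          = if k = j then 1 else 0) ∧
      (∀ k : Fin m, lam (Fin.last m) * ∑ k', H k k' * W (Fin.last m) k' = 1) := by
  set lam : Fin (m+1) → ℂ := fun j => if j = Fin.last m then -c j else c j with hlamdef
  have hlamne : ∀ j, lam j ≠ 0 := by
    intro j; rw [hlamdef]; dsimp only; split
    · exact neg_ne_zero.mpr (hc j)
    · exact hc j
  have hlamc : ∀ j : Fin m, lam j.castSucc = c j.castSucc := by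
    intro j; rw [hlamdef]; dsimp only
    rw [if_neg (Fin.castSucc_lt_last j).ne]
  set B : Matrix (Fin m) (Fin m) ℂ :=
    Matrix.of fun k j : Fin m => c j.castSucc * W j.castSucc k with hBdef
  have hBunit : IsUnit B := by
    rw [← Matrix.linearIndependent_cols_iff_isUnit]
    show LinearIndependent ℂ fun j : Fin m => B.transpose j
    have e : Fin m → {j : Fin (m+1) // j ≠ Fin.last m} :=
      fun j => ⟨j.castSucc, (Fin.castSucc_lt_last j).ne⟩
    have hli2 : LinearIndependent ℂ (fun j : Fin m => W j.castSucc) := by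
      have := hli.comp (fun j : Fin m => (⟨j.castSucc, (Fin.castSucc_lt_last j).ne⟩ :
          {j : Fin (m+1) // j ≠ Fin.last m}))
        (fun x y hxy => Fin.castSucc_injective m (congrArg Subtype.val hxy))
      exact this
    have hli3 := hli2.units_smul (fun j => Units.mk0 (c j.castSucc) (hc _))
    have : (fun j : Fin m => B.transpose j)
        = (fun j => Units.mk0 (c j.castSucc) (hc _) • W j.castSucc) := by
      funext j; funext k
      simp [hBdef, Units.smul_def]
    rw [this]
    exact hli3
  have hBdet : IsUnit B.det := (Matrix.isUnit_iff_isUnit_det B).mp hBunit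
  have hHB : B⁻¹ * B = 1 := Matrix.nonsing_inv_mul B hBdet
  refine ⟨lam, B⁻¹, hlamne, ?_, ?_, ?_⟩
  · exact (Matrix.isUnit_nonsing_inv_iff).mpr hBunit
  · intro k j
    have h1 : (B⁻¹ * B) k j = if k = j then 1 else 0 := by
      rw [hHB, Matrix.one_apply]
    rw [Matrix.mul_apply] at h1
    rw [← h1, hlamc, Finset.mul_sum]
    refine Finset.sum_congr rfl fun k' _ => ?_
    rw [hBdef]
    simp only [Matrix.of_apply]
    ring
  · intro k
    have hWlast : ∀ k' : Fin m, lam (Fin.last m) * W (Fin.last m) k'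
        = ∑ j : Fin m, c j.castSucc * W j.castSucc k' := by
      intro k'
      have := congrFun hrel k'
      rw [Fin.sum_univ_castSucc] at this
      simp only [Finset.sum_apply, Pi.smul_apply, Pi.add_apply, Pi.zero_apply,
        smul_eq_mul] at this
      rw [hlamdef]; dsimp only; rw [if_pos rfl]
      linear_combination -this
    calc lam (Fin.last m) * ∑ k', B⁻¹ k k' * W (Fin.last m) k'
        = ∑ k', B⁻¹ k k' * (lam (Fin.last m) * W (Fin.last m) k') := by
          rw [Finset.mul_sum]; exact Finset.sum_congr rfl fun _ _ => by ring
      _ = ∑ k', B⁻¹ k k' * ∑ j : Fin m, c j.castSucc * W j.castSucc k' := by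
          exact Finset.sum_congr rfl fun k' _ => by rw [hWlast]
      _ = ∑ j : Fin m, lam j.castSucc * ∑ k', B⁻¹ k k' * W j.castSucc k' := by
          simp only [Finset.mul_sum]
          rw [Finset.sum_comm]
          refine Finset.sum_congr rfl fun j _ => Finset.sum_congr rfl fun k' _ => by
            rw [hlamc]; ring
      _ = ∑ j : Fin m, if k = j then (1:ℂ) else 0 := by
          refine Finset.sum_congr rfl fun j _ => ?_
          have h1 : (B⁻¹ * B) k j = if k = j then 1 else 0 := by
            rw [hHB, Matrix.one_apply]
          rw [Matrix.mul_apply] at h1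
          rw [← h1, hlamc, Finset.mul_sum]
          refine Finset.sum_congr rfl fun k' _ => ?_
          rw [hBdef]; simp only [Matrix.of_apply]; ring
      _ = 1 := by simp

end Aux


/-- The main computation: given the data, conjugate `S` to `S0`. -/
lemma main_calc {m : ℕ} (hm : 1 ≤ m) (S : Tensor (m+1) (m+1) (m+1))
    (hS0 : ∀ i j k : Fin (m+1),
      ¬((k.val + 1 < m+1 ∧ i.val + j.val + 1 = m+1) ∨
        (k.val + 1 = m+1 ∧ i.val + j.val + 2 = m+1)) → S i j k = 0)
    (lam : Fin (m+1) → ℂ) (H : Matrix (Fin m) (Fin m) ℂ)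
    (u v : Fin (m+1) → ℂ)
    (hHunit : IsUnit H)
    (hW1 : ∀ k j : Fin m, lam j.castSucc * ∑ k', H k k' * Wmat S j.castSucc k'
        = if k = j then 1 else 0)
    (hW2 : ∀ k : Fin m, lam (Fin.last m) * ∑ k', H k k' * Wmat S (Fin.last m) k' = 1)
    (hu : ∀ i, u i ≠ 0) (hv : ∀ j, v j ≠ 0)
    (hK1 : ∀ j : Fin (m+1), u ⟨m - j.val, by omega⟩ * v j = lam j)
    (hK2 : ∀ j : Fin m, u ⟨m - 1 - j.val, by omega⟩ * v j.castSucc * avec S j = 1) :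
    ∃ (g₁ g₂ g₃ : Matrix (Fin (m+1)) (Fin (m+1)) ℂ),
      IsUnit g₁ ∧ IsUnit g₂ ∧ IsUnit g₃ ∧ actT g₁ g₂ g₃ S = S0 (m+1) := by
  obtain ⟨uH, huH⟩ := hHunit
  set Hinv : Matrix (Fin m) (Fin m) ℂ := ↑uH⁻¹ with hHinvdef
  have hHHinv : H * Hinv = 1 := by rw [hHinvdef, ← huH]; exact uH.mul_inv
  set g3 : Matrix (Fin (m+1)) (Fin (m+1)) ℂ := Matrix.of fun k k' =>
    if hk : k.val < m then (if hk' : k'.val < m then H ⟨k.val, hk⟩ ⟨k'.val, hk'⟩ else 0)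
    else (if k'.val < m then 0 else 1) with hg3def
  set g3inv : Matrix (Fin (m+1)) (Fin (m+1)) ℂ := Matrix.of fun k k' =>
    if hk : k.val < m then (if hk' : k'.val < m then Hinv ⟨k.val, hk⟩ ⟨k'.val, hk'⟩ else 0)
    else (if k'.val < m then 0 else 1) with hg3invdef
  have hg3mul : g3 * g3inv = 1 := by
    ext k k''
    rw [Matrix.mul_apply, Fin.sum_univ_castSucc]
    by_cases hk : k.val < m <;> by_cases hk'' : k''.val < m
    · have hsum : ∀ k' : Fin m, g3 k k'.castSucc * g3inv k'.castSucc k''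
          = H ⟨k.val, hk⟩ k' * Hinv k' ⟨k''.val, hk''⟩ := by
        intro k'
        rw [hg3def, hg3invdef]
        simp only [Matrix.of_apply, Fin.coe_castSucc]
        rw [dif_pos hk, dif_pos k'.isLt, dif_pos k'.isLt, dif_pos hk'']
      rw [Finset.sum_congr rfl fun k' _ => hsum k']
      have h1 := congrFun (congrFun hHHinv ⟨k.val, hk⟩) ⟨k''.val, hk''⟩
      rw [Matrix.mul_apply] at h1
      have hlast : g3 k (Fin.last m) * g3inv (Fin.last m) k'' = 0 := by
        rw [hg3def, hg3invdef]
        simp only [Matrix.of_apply, Fin.val_last]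
        rw [dif_pos hk, dif_neg (lt_irrefl m), dif_neg (lt_irrefl m)]
        simp
      rw [hlast, add_zero, h1]
      show (1 : Matrix (Fin m) (Fin m) ℂ) _ _ = (1 : Matrix (Fin (m+1)) (Fin (m+1)) ℂ) _ _
      rw [Matrix.one_apply, Matrix.one_apply]
      simp [Fin.ext_iff]
    · have hsum : ∀ k' : Fin m, g3 k k'.castSucc * g3inv k'.castSucc k'' = 0 := by
        intro k'
        rw [hg3invdef]
        simp only [Matrix.of_apply, Fin.coe_castSucc]
        rw [dif_pos k'.isLt, dif_neg hk'']
        simp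
      rw [Finset.sum_congr rfl fun k' _ => hsum k', Finset.sum_const_zero]
      have hlast : g3 k (Fin.last m) = 0 := by
        rw [hg3def]
        simp only [Matrix.of_apply, Fin.val_last]
        rw [dif_pos hk]
        simp
      rw [hlast, zero_mul, add_zero, Matrix.one_apply,
        if_neg (by simp [Fin.ext_iff]; omega)]
    · have hsum : ∀ k' : Fin m, g3 k k'.castSucc * g3inv k'.castSucc k'' = 0 := by
        intro k'
        rw [hg3def]
        simp only [Matrix.of_apply, Fin.coe_castSucc]
        rw [dif_neg hk, if_pos k'.isLt]
        simp
      rw [Finset.sum_congr rfl fun k' _ => hsum k', Finset.sum_const_zero]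
      have hlast : g3inv (Fin.last m) k'' = 0 := by
        rw [hg3invdef]
        simp only [Matrix.of_apply, Fin.val_last]
        rw [dif_neg (lt_irrefl m), if_pos hk'']
      rw [hlast, mul_zero, add_zero, Matrix.one_apply,
        if_neg (by simp [Fin.ext_iff]; omega)]
    · have hsum : ∀ k' : Fin m, g3 k k'.castSucc * g3inv k'.castSucc k'' = 0 := by
        intro k'
        rw [hg3def]
        simp only [Matrix.of_apply, Fin.coe_castSucc]
        rw [dif_neg hk, if_pos k'.isLt]
        simp
      rw [Finset.sum_congr rfl fun k' _ => hsum k', Finset.sum_const_zero]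
      have hlast : g3 k (Fin.last m) * g3inv (Fin.last m) k'' = 1 := by
        rw [hg3def, hg3invdef]
        simp only [Matrix.of_apply, Fin.val_last]
        rw [dif_neg hk, dif_neg (lt_irrefl m), if_neg hk'',
          if_neg (lt_irrefl m)]
        simp
      rw [hlast, zero_add, Matrix.one_apply, if_pos (by simp [Fin.ext_iff]; omega)]
  refine ⟨Matrix.diagonal u, Matrix.diagonal v, g3, ?_, ?_, ?_, ?_⟩
  · rw [Matrix.isUnit_iff_isUnit_det, Matrix.det_diagonal, isUnit_iff_ne_zero]
    exact Finset.prod_ne_zero_iff.mpr fun i _ => hu i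
  · rw [Matrix.isUnit_iff_isUnit_det, Matrix.det_diagonal, isUnit_iff_ne_zero]
    exact Finset.prod_ne_zero_iff.mpr fun i _ => hv i
  · have hdet : g3.det * g3inv.det = 1 := by
      rw [← Matrix.det_mul, hg3mul, Matrix.det_one]
    exact (Matrix.isUnit_iff_isUnit_det g3).mpr (IsUnit.of_mul_eq_one _ hdet)
  · funext i j k
    have step1 : actT (Matrix.diagonal u) (Matrix.diagonal v) g3 S i j k
        = ∑ k', u i * v j * (g3 k k' * S i j k') := by
      simp only [actT]
      rw [Finset.sum_eq_single i (fun b _ hb => by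
          simp [Matrix.diagonal_apply_ne u (Ne.symm hb)])
        (fun h => absurd (Finset.mem_univ i) h)]
      rw [Finset.sum_eq_single j (fun b _ hb => by
          simp [Matrix.diagonal_apply_ne v (Ne.symm hb)])
        (fun h => absurd (Finset.mem_univ j) h)]
      rw [Matrix.diagonal_apply_eq, Matrix.diagonal_apply_eq]
      exact Finset.sum_congr rfl fun k' _ => by ring
    rw [step1]
    by_cases hij1 : i.val + j.val + 1 = m + 1
    · -- anti-diagonal case
      have hlastS : S i j (Fin.last m) = 0 :=
        hS0 _ _ _ (by simp only [Fin.val_last]; omega)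
      rw [Fin.sum_univ_castSucc, hlastS]
      have hSij : ∀ k' : Fin m, S i j k'.castSucc = Wmat S j k' := by
        intro k'
        have hi : i = ⟨m - j.val, by omega⟩ := Fin.ext (show i.val = m - j.val by omega)
        rw [hi]; rfl
      by_cases hk : k.val < m
      · have hg3e : ∀ k' : Fin m, g3 k k'.castSucc = H ⟨k.val, hk⟩ k' := by
          intro k'
          rw [hg3def]
          simp only [Matrix.of_apply, Fin.coe_castSucc]
          rw [dif_pos hk, dif_pos k'.isLt]
        by_cases hjm : j.val < m
        · have hiv : u i * v j = lam j := by
            rw [← hK1 j]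
            congr 2
            exact Fin.ext (show i.val = m - j.val by omega)
          have hjc : (⟨j.val, hjm⟩ : Fin m).castSucc = j := Fin.ext rfl
          have hW := hW1 ⟨k.val, hk⟩ ⟨j.val, hjm⟩
          rw [hjc] at hW
          calc (∑ k' : Fin m, u i * v j * (g3 k k'.castSucc * S i j k'.castSucc))
                + u i * v j * (g3 k (Fin.last m) * 0)
              = lam j * ∑ k' : Fin m, H ⟨k.val, hk⟩ k' * Wmat S j k' := by
                rw [mul_zero, mul_zero, add_zero, Finset.mul_sum]
                exact Finset.sum_congr rfl fun k' _ => by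
                  rw [hg3e, hSij, ← hiv]
            _ = if (⟨k.val, hk⟩ : Fin m) = ⟨j.val, hjm⟩ then 1 else 0 := hW
            _ = S0 (m+1) i j k := by
                simp only [S0, Fin.ext_iff]
                split_ifs <;> first | rfl | omega
        · have hj : j = Fin.last m := Fin.ext (by
            simp only [Fin.val_last]; have := j.isLt; omega)
          subst hj
          have hiv : u i * v (Fin.last m) = lam (Fin.last m) := by
            rw [← hK1 (Fin.last m)]
            congr 2
            exact Fin.ext (show i.val = m - (Fin.last m).val by
              simp only [Fin.val_last]; omega)
          calc (∑ k' : Fin m, u i * v (Fin.last m)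
                  * (g3 k k'.castSucc * S i (Fin.last m) k'.castSucc))
                + u i * v (Fin.last m) * (g3 k (Fin.last m) * 0)
              = lam (Fin.last m)
                  * ∑ k' : Fin m, H ⟨k.val, hk⟩ k' * Wmat S (Fin.last m) k' := by
                rw [mul_zero, mul_zero, add_zero, Finset.mul_sum]
                exact Finset.sum_congr rfl fun k' _ => by
                  rw [hg3e, hSij, ← hiv]
            _ = 1 := hW2 ⟨k.val, hk⟩
            _ = S0 (m+1) i (Fin.last m) k := by
                simp only [S0, Fin.val_last, or_true, and_true]
                split_ifs <;> first | rfl | omega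
      · have hk2 : k = Fin.last m := Fin.ext (by
          simp only [Fin.val_last]; have := k.isLt; omega)
        subst hk2
        have hg3z : ∀ k' : Fin m, g3 (Fin.last m) k'.castSucc = 0 := by
          intro k'
          rw [hg3def]
          simp only [Matrix.of_apply, Fin.val_last, Fin.coe_castSucc]
          rw [dif_neg (lt_irrefl m), if_pos k'.isLt]
        rw [Finset.sum_congr rfl (fun k' _ => by rw [hg3z, zero_mul, mul_zero]),
          Finset.sum_const_zero, mul_zero, mul_zero, add_zero]
        simp only [S0, Fin.val_last]
        rw [if_neg (by omega), if_neg (by omega)]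
    · by_cases hij2 : i.val + j.val + 2 = m + 1
      · have hjm : j.val < m := by omega
        have hmid : ∀ k' : Fin m, S i j k'.castSucc = 0 := fun k' =>
          hS0 _ _ _ (by simp only [Fin.coe_castSucc]; omega)
        rw [Fin.sum_univ_castSucc,
          Finset.sum_congr rfl (fun k' _ => by rw [hmid, mul_zero, mul_zero]),
          Finset.sum_const_zero, zero_add]
        have hSlast : S i j (Fin.last m) = avec S ⟨j.val, hjm⟩ := by
          have hi : i = ⟨m - 1 - j.val, by omega⟩ :=
            Fin.ext (show i.val = m - 1 - j.val by omega)
          rw [hi]; rfl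
        by_cases hk : k.val < m
        · have hg3z : g3 k (Fin.last m) = 0 := by
            rw [hg3def]
            simp only [Matrix.of_apply, Fin.val_last]
            rw [dif_pos hk, dif_neg (lt_irrefl m)]
          rw [hg3z, zero_mul, mul_zero]
          simp only [S0]
          rw [if_neg (by omega), if_neg (by omega)]
        · have hk2 : k = Fin.last m := Fin.ext (by
            simp only [Fin.val_last]; have := k.isLt; omega)
          subst hk2
          have hg3o : g3 (Fin.last m) (Fin.last m) = 1 := by
            rw [hg3def]
            simp only [Matrix.of_apply, Fin.val_last]
            rw [dif_neg (lt_irrefl m), if_neg (lt_irrefl m)]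
          rw [hg3o, one_mul, hSlast]
          have hjc : (⟨j.val, hjm⟩ : Fin m).castSucc = j := Fin.ext rfl
          have hK := hK2 ⟨j.val, hjm⟩
          rw [hjc] at hK
          have hiu : u i = u ⟨m - 1 - j.val, by omega⟩ :=
            congrArg u (Fin.ext (show i.val = m - 1 - j.val by omega))
          have hS0v : S0 (m+1) i j (Fin.last m) = 1 := by
            have hlv : (Fin.last m).val = m := Fin.val_last m
            simp only [S0]
            rw [if_neg (by omega), if_pos (by omega)]
          rw [hS0v, hiu]
          exact hK
      · have hz : ∀ k' : Fin (m+1), S i j k' = 0 := fun k' =>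
          hS0 _ _ _ (by omega)
        rw [Finset.sum_congr rfl (fun k' _ => by rw [hz, mul_zero, mul_zero]),
          Finset.sum_const_zero]
        simp only [S0]
        rw [if_neg (by omega), if_neg (by omega)]

/-- If `S` has support in `Γₙ`, all `a_i(S)` are nonzero, and any
`n−1` rows of `W(S)` are linearly independent, then `S` is GL-equivalent to `S₀`. -/
theorem generic_Gamma_tensor_equivalent_to_S0 {n : ℕ} (hn : 2 ≤ n)
    (S : Tensor n n n) (hsupp : supp S ⊆ Gamma n)
    (ha : ∀ i : Fin (n - 1), avec S i ≠ 0)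
    (hrows : ∀ i : Fin n,
      LinearIndependent ℂ (fun j : {j : Fin n // j ≠ i} => Wmat S j.1)) :
    ∃ (g₁ g₂ g₃ : Matrix (Fin n) (Fin n) ℂ),
      IsUnit g₁ ∧ IsUnit g₂ ∧ IsUnit g₃ ∧ actT g₁ g₂ g₃ S = S0 n := by
  obtain ⟨m, rfl⟩ : ∃ m, n = m + 1 := ⟨n - 1, by omega⟩
  have hm : 1 ≤ m := by omega
  have hS0 : ∀ i j k : Fin (m+1),
      ¬((k.val + 1 < m+1 ∧ i.val + j.val + 1 = m+1) ∨
        (k.val + 1 = m+1 ∧ i.val + j.val + 2 = m+1)) → S i j k = 0 := by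
    intro i j k hcond
    by_contra hne
    exact hcond (hsupp (show (i, j, k) ∈ supp S from hne))
  have hnotli : ¬ LinearIndependent ℂ (fun j : Fin (m+1) => Wmat S j) := by
    intro h
    have h2 := h.fintype_card_le_finrank
    rw [Module.finrank_fintype_fun_eq_card] at h2
    simp only [Fintype.card_fin] at h2
    omega
  obtain ⟨c, hcsum, i₀, hi₀⟩ := Fintype.not_linearIndependent_iff.mp hnotli
  have hcne : ∀ j, c j ≠ 0 := by
    intro j hj
    have hli := Fintype.linearIndependent_iff.mp (hrows j)
    have hsum2 : ∑ p : {x : Fin (m+1) // x ≠ j}, c p.1 • Wmat S p.1 = 0 := by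
      have e1 : ∑ x ∈ Finset.univ.erase j, c x • Wmat S x
          = ∑ p : {x : Fin (m+1) // x ≠ j}, c p.1 • Wmat S p.1 :=
        Finset.sum_subtype _ (by simp [Finset.mem_erase]) _
      have e2 : ∑ x ∈ Finset.univ.erase j, c x • Wmat S x = 0 := by
        have e3 : c j • Wmat S j + ∑ x ∈ Finset.univ.erase j, c x • Wmat S x
            = ∑ x, c x • Wmat S x :=
          Finset.add_sum_erase _ (fun x => c x • Wmat S x) (Finset.mem_univ j)
        rw [hcsum, hj, zero_smul, zero_add] at e3
        exact e3
      rw [← e1, e2]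
    have hall := hli (fun p => c p.1) hsum2
    have hij : i₀ ≠ j := fun h => hi₀ (h ▸ hj)
    exact hi₀ (hall ⟨i₀, hij⟩)
  obtain ⟨lam, H, hlamne, hHunit, hW1, hW2⟩ :=
    exists_lamH (fun j => Wmat S j) (hrows (Fin.last m)) c hcne hcsum
  obtain ⟨u, v, hu, hv, hK1, hK2⟩ := exists_uv lam (fun j => avec S j) hlamne ha
  exact main_calc hm S hS0 lam H u v hHunit hW1 hW2 hu hv hK1 hK2

end NonFreePaper
end

section
/- Let n ≥ 2. Then: (1) ⟨q,h⟩ := Σ_{j=1}^{n} (q₁)_j(h₁)_j + Σ_{j=1}^{n} (q₂)_j(h₂)_j + Σ_{j=1}^{n} (q₃)_j(h₃)_j = 1/n; and (2) for each i ∈ {1,2,3}, the vector q_i ∈ ℝⁿ has nonnegative entries, is nonincreasing ((q_i)_1 ≥ (q_i)_2 ≥ … ≥ (q_i)_n), and its entries sum to 1. -/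
open scoped BigOperators

namespace NonFreePaper

/-- `N = n(n²−1)/6 + (n−1)/n`. -/
noncomputable def Nconst (n : ℕ) : ℝ :=
  ((n : ℝ) * ((n : ℝ) ^ 2 - 1)) / 6 + ((n : ℝ) - 1) / n

/-- `(h₁)_j = (n+1−2j)/2` for `j ∈ [n]` (1-based index). -/
noncomputable def h1 (n : ℕ) (j : ℕ) : ℝ := ((n : ℝ) + 1 - 2 * j) / 2

/-- `h₂ = h₁`. -/
noncomputable def h2 (n : ℕ) (j : ℕ) : ℝ := h1 n j

/-- `(h₃)_j = 1/n` for `j ∈ [n−1]` and `(h₃)_n = 1/n − 1` (1-based index). -/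
noncomputable def h3 (n : ℕ) (j : ℕ) : ℝ :=
  if j = n then 1 / (n : ℝ) - 1 else 1 / (n : ℝ)

/-- `(q₁)_j = 1/n + (n+1−2j)/(2nN)` for `j ∈ [n]` (1-based index). -/
noncomputable def q1 (n : ℕ) (j : ℕ) : ℝ :=
  1 / (n : ℝ) + ((n : ℝ) + 1 - 2 * j) / (2 * n * Nconst n)

/-- `q₂ = q₁`. -/
noncomputable def q2 (n : ℕ) (j : ℕ) : ℝ := q1 n j

/-- `(q₃)_j = 1/n + 1/(n²N)` for `j ∈ [n−1]`, and `(q₃)_n = 1/n + (1/n − 1)/(nN)`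
(1-based index). -/
noncomputable def q3 (n : ℕ) (j : ℕ) : ℝ :=
  if j = n then 1 / (n : ℝ) + (1 / (n : ℝ) - 1) / (n * Nconst n)
  else 1 / (n : ℝ) + 1 / ((n : ℝ) ^ 2 * Nconst n)

/-- `b_j = Σ_{ℓ=1}^j ((q₂)_ℓ − (q₁)_{n+1−ℓ})`; in particular `b 0 = 0`. -/
noncomputable def bseq (n : ℕ) (j : ℕ) : ℝ :=
  ∑ ℓ ∈ Finset.range j, (q2 n (ℓ + 1) - q1 n (n - ℓ))

/-! ### Auxiliary lemmas -/

lemma sum_range_cast (n : ℕ) : ∑ j ∈ Finset.range n, (j:ℝ) = n*((n:ℝ)-1)/2 := by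
  induction n with
  | zero => simp
  | succ k ih => rw [Finset.sum_range_succ, ih]; push_cast; ring

lemma sum_range_sq_cast (n : ℕ) :
    ∑ j ∈ Finset.range n, (j:ℝ)^2 = n*((n:ℝ)-1)*(2*(n:ℝ)-1)/6 := by
  induction n with
  | zero => simp
  | succ k ih => rw [Finset.sum_range_succ, ih]; push_cast; ring

lemma sum_eq_quad {n : ℕ} (f : ℕ → ℝ) (A B C : ℝ)
    (h : ∀ j < n, f j = A + B*j + C*(j:ℝ)^2) :
    ∑ j ∈ Finset.range n, f j
      = n*A + B*((n:ℝ)*((n:ℝ)-1)/2) + C*((n:ℝ)*((n:ℝ)-1)*(2*(n:ℝ)-1)/6) := by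
  rw [Finset.sum_congr rfl fun j hj => h j (Finset.mem_range.mp hj)]
  rw [Finset.sum_add_distrib, Finset.sum_add_distrib, ← Finset.mul_sum, ← Finset.mul_sum,
    sum_range_cast, sum_range_sq_cast, Finset.sum_const, nsmul_eq_mul]
  simp [Finset.card_range]

lemma Neq (n : ℕ) (hn : 2 ≤ n) :
    Nconst n * (6*n) = (n:ℝ)^2*((n:ℝ)^2-1) + 6*((n:ℝ)-1) := by
  have hn0 : (n:ℝ) ≠ 0 := by positivity
  unfold Nconst; field_simp

lemma Npos (n : ℕ) (hn : 2 ≤ n) : 0 < Nconst n := by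
  have hnR : (2:ℝ) ≤ n := by exact_mod_cast hn
  nlinarith [Neq n hn, sq_nonneg ((n:ℝ)-2)]

lemma h2N (n : ℕ) (hn : 2 ≤ n) : (n:ℝ) - 1 ≤ 2 * Nconst n := by
  have hnR : (2:ℝ) ≤ n := by exact_mod_cast hn
  nlinarith [Neq n hn, sq_nonneg ((n:ℝ)-2)]

lemma hnN (n : ℕ) (hn : 2 ≤ n) : (n:ℝ) - 1 ≤ (n:ℝ) * Nconst n := by
  have hnR : (2:ℝ) ≤ n := by exact_mod_cast hn
  nlinarith [Neq n hn, sq_nonneg ((n:ℝ)-2)]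

lemma q1_frac (n : ℕ) (hn : 2 ≤ n) (j : ℕ) :
    q1 n (j+1) = (2*Nconst n + ((n:ℝ)-1) - 2*(j:ℝ))/(2*(n:ℝ)*Nconst n) := by
  have hn0 : (n:ℝ) ≠ 0 := by positivity
  have hN0 : Nconst n ≠ 0 := ne_of_gt (Npos n hn)
  unfold q1; push_cast; field_simp; ring

lemma q1_nonneg (n : ℕ) (hn : 2 ≤ n) (j : ℕ) (hj : j + 1 ≤ n) : 0 ≤ q1 n (j+1) := by
  have hnR : (2:ℝ) ≤ n := by exact_mod_cast hn
  have hN := Npos n hn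
  have hjR : (j:ℝ) ≤ (n:ℝ) - 1 := by
    have : ((j:ℝ)+1) ≤ n := by exact_mod_cast hj
    linarith
  rw [q1_frac n hn j]
  apply div_nonneg
  · have := h2N n hn; linarith
  · nlinarith

lemma q1_anti (n : ℕ) (hn : 2 ≤ n) : Antitone fun j : Fin n => q1 n (j.val + 1) := by
  intro a b hab
  have hnR : (2:ℝ) ≤ n := by exact_mod_cast hn
  have hN := Npos n hn
  have habR : (a.val:ℝ) ≤ b.val := by exact_mod_cast hab
  simp only [q1_frac n hn]
  have hd : (0:ℝ) < 2*(n:ℝ)*Nconst n := by nlinarith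
  exact (div_le_div_iff_of_pos_right hd).mpr (by linarith)

lemma q3_nonneg (n : ℕ) (hn : 2 ≤ n) (j : ℕ) : 0 ≤ q3 n j := by
  have hnR : (2:ℝ) ≤ n := by exact_mod_cast hn
  have hN := Npos n hn
  have hn2 : (0:ℝ) < (n:ℝ)^2 := by nlinarith
  have hpos : (0:ℝ) < (n:ℝ)^2 * Nconst n := mul_pos hn2 hN
  unfold q3
  split
  · have e : 1/(n:ℝ) + (1/(n:ℝ) - 1)/((n:ℝ)*Nconst n)
        = ((n:ℝ)*Nconst n + 1 - n)/((n:ℝ)^2*Nconst n) := by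
      have hn0 : (n:ℝ) ≠ 0 := by positivity
      field_simp; ring
    rw [e]
    apply div_nonneg _ (le_of_lt hpos)
    have := hnN n hn; linarith
  · have : (0:ℝ) ≤ 1/((n:ℝ)^2*Nconst n) := le_of_lt (by positivity)
    have h1 : (0:ℝ) ≤ 1/(n:ℝ) := by positivity
    linarith

lemma q3_anti (n : ℕ) (hn : 2 ≤ n) : Antitone fun j : Fin n => q3 n (j.val + 1) := by
  intro a b hab
  have hnR : (2:ℝ) ≤ n := by exact_mod_cast hn
  have hN := Npos n hn
  simp only []
  by_cases hb : b.val + 1 = n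
  · by_cases ha : a.val + 1 = n
    · unfold q3; rw [if_pos ha, if_pos hb]
    · unfold q3; rw [if_pos hb, if_neg ha]
      have h1 : (1/(n:ℝ) - 1)/((n:ℝ)*Nconst n) ≤ 0 := by
        apply div_nonpos_of_nonpos_of_nonneg
        · have : (1:ℝ)/n ≤ 1 := by
            rw [div_le_one (by linarith)]; linarith
          linarith
        · nlinarith
      have h2 : (0:ℝ) ≤ 1/((n:ℝ)^2*Nconst n) := le_of_lt (by positivity)
      linarith
  · have ha : a.val + 1 ≠ n := by
      have := hab; have hb' := b.isLt; have ha' := a.isLt; omega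
    unfold q3; rw [if_neg ha, if_neg hb]

lemma q1_sum (n : ℕ) (hn : 2 ≤ n) : ∑ j ∈ Finset.range n, q1 n (j+1) = 1 := by
  have hn0 : (n:ℝ) ≠ 0 := by positivity
  have hN0 : Nconst n ≠ 0 := ne_of_gt (Npos n hn)
  rw [sum_eq_quad (fun j => q1 n (j+1))
      (1/(n:ℝ) + ((n:ℝ)-1)/(2*(n:ℝ)*Nconst n)) (-(1/((n:ℝ)*Nconst n))) 0
      (by intro j hj; unfold q1; push_cast; field_simp; ring)]
  field_simp
  ring

lemma q1h1_sum (n : ℕ) (hn : 2 ≤ n) :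
    ∑ j ∈ Finset.range n, q1 n (j+1) * h1 n (j+1) = ((n:ℝ)^2-1)/(12*Nconst n) := by
  have hn0 : (n:ℝ) ≠ 0 := by positivity
  have hN0 : Nconst n ≠ 0 := ne_of_gt (Npos n hn)
  rw [sum_eq_quad (fun j => q1 n (j+1) * h1 n (j+1))
      (((n:ℝ)-1)/(2*(n:ℝ)) + ((n:ℝ)-1)^2/(4*(n:ℝ)*Nconst n))
      (-(1/(n:ℝ)) - ((n:ℝ)-1)/((n:ℝ)*Nconst n)) (1/((n:ℝ)*Nconst n))
      (by intro j hj; unfold q1 h1; push_cast; field_simp; ring)]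
  field_simp
  ring

lemma q3_sum (n : ℕ) (hn : 2 ≤ n) : ∑ j ∈ Finset.range n, q3 n (j+1) = 1 := by
  have hn0 : (n:ℝ) ≠ 0 := by positivity
  have hN0 : Nconst n ≠ 0 := ne_of_gt (Npos n hn)
  obtain ⟨m, rfl⟩ : ∃ m, n = m + 1 := ⟨n - 1, by omega⟩
  rw [Finset.sum_range_succ,
    Finset.sum_congr rfl (fun j hj => show q3 (m+1) (j+1)
        = 1/((m:ℝ)+1) + 1/(((m:ℝ)+1)^2*Nconst (m+1)) by
      have hj' := Finset.mem_range.mp hj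
      unfold q3; rw [if_neg (by omega)]; push_cast; ring),
    Finset.sum_const, Finset.card_range, nsmul_eq_mul]
  unfold q3; rw [if_pos rfl]
  push_cast at hn0 hN0 ⊢
  field_simp
  ring

lemma q3h3_sum (n : ℕ) (hn : 2 ≤ n) :
    ∑ j ∈ Finset.range n, q3 n (j+1) * h3 n (j+1)
      = ((n:ℝ)-1)/((n:ℝ)^2*Nconst n) := by
  have hn0 : (n:ℝ) ≠ 0 := by positivity
  have hN0 : Nconst n ≠ 0 := ne_of_gt (Npos n hn)
  obtain ⟨m, rfl⟩ : ∃ m, n = m + 1 := ⟨n - 1, by omega⟩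
  rw [Finset.sum_range_succ,
    Finset.sum_congr rfl (fun j hj => show q3 (m+1) (j+1) * h3 (m+1) (j+1)
        = (1/((m:ℝ)+1) + 1/(((m:ℝ)+1)^2*Nconst (m+1))) * (1/((m:ℝ)+1)) by
      have hj' := Finset.mem_range.mp hj
      unfold q3 h3; rw [if_neg (by omega), if_neg (by omega)]; push_cast; ring),
    Finset.sum_const, Finset.card_range, nsmul_eq_mul]
  unfold q3 h3; rw [if_pos rfl, if_pos rfl]
  push_cast at hn0 hN0 ⊢
  field_simp
  ring

/-- `⟨q, h⟩ = 1/n`, and each `q_i` is entrywise nonnegative,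
nonincreasing, and sums to `1`. -/
theorem q_basic_properties (n : ℕ) (hn : 2 ≤ n) :
    ((∑ j : Fin n, q1 n (j.val + 1) * h1 n (j.val + 1))
      + (∑ j : Fin n, q2 n (j.val + 1) * h2 n (j.val + 1))
      + (∑ j : Fin n, q3 n (j.val + 1) * h3 n (j.val + 1)) = 1 / (n : ℝ)) ∧
    ((∀ j : Fin n, 0 ≤ q1 n (j.val + 1)) ∧
      (Antitone fun j : Fin n => q1 n (j.val + 1)) ∧
      (∑ j : Fin n, q1 n (j.val + 1)) = 1) ∧
    ((∀ j : Fin n, 0 ≤ q2 n (j.val + 1)) ∧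
      (Antitone fun j : Fin n => q2 n (j.val + 1)) ∧
      (∑ j : Fin n, q2 n (j.val + 1)) = 1) ∧
    ((∀ j : Fin n, 0 ≤ q3 n (j.val + 1)) ∧
      (Antitone fun j : Fin n => q3 n (j.val + 1)) ∧
      (∑ j : Fin n, q3 n (j.val + 1)) = 1) := by
  have hn0 : (n:ℝ) ≠ 0 := by positivity
  have hnR : (2:ℝ) ≤ n := by exact_mod_cast hn
  have hN := Npos n hn
  have hN0 : Nconst n ≠ 0 := ne_of_gt hN
  have hq2 : q2 = q1 := rfl
  have hh2 : h2 = h1 := rfl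
  refine ⟨?_, ⟨?_, ?_, ?_⟩, ⟨?_, ?_, ?_⟩, ⟨?_, ?_, ?_⟩⟩
  · rw [hq2, hh2,
      Fin.sum_univ_eq_sum_range (fun j => q1 n (j + 1) * h1 n (j + 1)) n,
      Fin.sum_univ_eq_sum_range (fun j => q3 n (j + 1) * h3 n (j + 1)) n,
      q1h1_sum n hn, q3h3_sum n hn]
    field_simp
    linear_combination (-2:ℝ) * Neq n hn
  · exact fun j => q1_nonneg n hn j.val j.isLt
  · exact q1_anti n hn
  · rw [Fin.sum_univ_eq_sum_range (fun j => q1 n (j + 1)) n]; exact q1_sum n hn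
  · exact fun j => q1_nonneg n hn j.val j.isLt
  · exact q1_anti n hn
  · rw [hq2, Fin.sum_univ_eq_sum_range (fun j => q1 n (j + 1)) n]; exact q1_sum n hn
  · exact fun j => q3_nonneg n hn (j.val + 1)
  · exact q3_anti n hn
  · rw [Fin.sum_univ_eq_sum_range (fun j => q3 n (j + 1)) n]; exact q3_sum n hn

end NonFreePaper
end

section
/- Let n ≥ 2. Then for every j ∈ [n] (with the convention b₀ = 0): (1) (q₂)_j − b_j = (q₁)_{n+1−j} − b_{j−1}; and (2) 0 ≤ (q₂)_j − b_j < (1 − (q₃)_n)/(n−1). -/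
open scoped BigOperators

namespace NonFreePaper

lemma bseq_eq (n : ℕ) (hn : 2 ≤ n) (j : ℕ) (hjn : j ≤ n) :
    bseq n j = (j:ℝ) * ((n:ℝ) - j) / ((n:ℝ) * Nconst n) := by
  induction j with
  | zero => simp [bseq]
  | succ k ih =>
    have hk : k ≤ n := Nat.le_of_succ_le hjn
    have hN := Npos n hn
    have hx : (2:ℝ) ≤ (n:ℝ) := by exact_mod_cast hn
    have hx0 : (0:ℝ) < (n:ℝ) := by linarith
    rw [bseq, Finset.sum_range_succ, ← bseq, ih hk]
    have hcast : ((n - k : ℕ) : ℝ) = (n:ℝ) - k := by rw [Nat.cast_sub hk]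
    rw [q2, q1, q1, hcast]
    push_cast
    field_simp
    ring

/-- For every `j ∈ [n]`: `(q₂)_j − b_j = (q₁)_{n+1−j} − b_{j−1}`
and `0 ≤ (q₂)_j − b_j < (1 − (q₃)_n)/(n−1)`. -/
theorem b_gap_properties (n : ℕ) (hn : 2 ≤ n) (j : ℕ) (hj : 1 ≤ j) (hjn : j ≤ n) :
    (q2 n j - bseq n j = q1 n (n + 1 - j) - bseq n (j - 1)) ∧
    (0 ≤ q2 n j - bseq n j) ∧
    (q2 n j - bseq n j < (1 - q3 n n) / ((n : ℝ) - 1)) := by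
  have hN := Npos n hn
  have hx : (2:ℝ) ≤ (n:ℝ) := by exact_mod_cast hn
  have hx0 : (0:ℝ) < (n:ℝ) := by linarith
  have ht1 : (1:ℝ) ≤ (j:ℝ) := by exact_mod_cast hj
  have htn : (j:ℝ) ≤ (n:ℝ) := by exact_mod_cast hjn
  have hbj := bseq_eq n hn j hjn
  have hbj' := bseq_eq n hn (j-1) (le_trans (Nat.sub_le j 1) hjn)
  have hc1 : ((j - 1 : ℕ) : ℝ) = (j:ℝ) - 1 := by
    rw [Nat.cast_sub hj]; norm_num
  have hc2 : ((n + 1 - j : ℕ) : ℝ) = (n:ℝ) + 1 - j := by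
    rw [Nat.cast_sub (le_trans hjn (Nat.le_succ n))]; push_cast; ring
  have hNlb : ((n:ℝ) * ((n:ℝ)^2 - 1))/6 ≤ Nconst n := by
    unfold Nconst
    have : 0 ≤ ((n:ℝ) - 1)/(n:ℝ) := div_nonneg (by linarith) (by linarith)
    linarith
  set x := (n:ℝ)
  set t := (j:ℝ)
  set N := Nconst n
  rw [hc1] at hbj'
  refine ⟨?_, ?_, ?_⟩
  · rw [hbj, hbj', q2, q1, q1, hc2]
    rw [show (n:ℝ) = x from rfl, show (j:ℝ) = t from rfl, show Nconst n = N from rfl]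
    field_simp
    ring
  · rw [hbj, q2, q1]
    have key : 1/x + (x + 1 - 2*t)/(2*x*N) - t*(x - t)/(x*N)
        = (2*N - (x-1) - 2*(t-1)*(x-t))/(2*x*N) := by
      field_simp; ring
    rw [key]
    apply div_nonneg _ (by positivity)
    have h4 : (t-1)*(x-t) ≤ (x-1)^2/4 := by nlinarith [sq_nonneg ((x-t)-(t-1))]
    nlinarith
  · rw [hbj, q2, q1, q3, if_pos rfl]
    have hrhs : (1 - (1/x + (1/x - 1)/(x*N)))/(x-1) = 1/x + 1/(x^2*N) := by
      rw [div_eq_iff (by linarith : x - 1 ≠ 0)]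
      field_simp
      ring
    rw [hrhs]
    have key : 1/x + 1/(x^2*N) - (1/x + (x + 1 - 2*t)/(2*x*N) - t*(x - t)/(x*N))
        = (2 + x*(x-1) + 2*x*(x-t)*(t-1))/(2*x^2*N) := by
      field_simp; ring
    have hpos : 0 < (2 + x*(x-1) + 2*x*(x-t)*(t-1))/(2*x^2*N) := by
      apply div_pos _ (by positivity)
      nlinarith [mul_nonneg (mul_nonneg hx0.le (by linarith : (0:ℝ) ≤ x - t)) (by linarith : (0:ℝ) ≤ t - 1)]
    linarith

end NonFreePaper
end

section
/- Let n ≥ 2, let λ ≥ 0 be a real number, and let d ∈ ℝⁿ satisfy 0 ≤ d_i ≤ λ for all i ∈ [n] and Σ_{i=1}^{n} d_i = (n−1)·λ. Then there exists a complex n×(n−1) matrix W such that W*W = λ·I_{n−1} and W·W* = λ·Iₙ − w·wᵀ, where w ∈ ℝⁿ is the vector with entries w_i = √(λ − d_i) and W* denotes the conjugate transpose. -/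
open scoped BigOperators Matrix

namespace NonFreePaper

/-- Householder construction over ℝ. -/
lemma exists_real_W (m : ℕ) (lam : ℝ) (hlam : 0 < lam) (w : Fin (m+1) → ℝ)
    (hw : ∀ i, 0 ≤ w i) (hsum : ∑ i, w i ^ 2 = lam) :
    ∃ W : Matrix (Fin (m+1)) (Fin m) ℝ,
      (∀ j k, ∑ i, W i j * W i k = if j = k then lam else 0) ∧
      (∀ i k, ∑ j, W i j * W k j = (if i = k then lam else 0) - w i * w k) := by
  obtain ⟨s, hs⟩ : ∃ s : ℝ, s = Real.sqrt lam := ⟨_, rfl⟩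
  have hs0 : 0 < s := hs ▸ Real.sqrt_pos.mpr hlam
  have hs2 : s ^ 2 = lam := hs ▸ Real.sq_sqrt hlam.le
  have hw0s : 0 < w 0 + s := by have := hw 0; linarith
  obtain ⟨c, hc⟩ : ∃ c : ℝ, c = 2 * s * (w 0 + s) := ⟨_, rfl⟩
  have hc0 : 0 < c := by rw [hc]; positivity
  obtain ⟨v, hv⟩ : ∃ v : Fin (m+1) → ℝ,
      v = fun i => w i + (if i = 0 then s else 0) := ⟨_, rfl⟩
  have hv0 : v 0 = w 0 + s := by simp [hv]
  have hvsucc : ∀ i : Fin m, v i.succ = w i.succ := by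
    intro i; simp [hv, Fin.succ_ne_zero]
  have hvsum : ∑ i, v i ^ 2 = c := by
    rw [Fin.sum_univ_succ, hv0]
    rw [Fin.sum_univ_succ] at hsum
    rw [Finset.sum_congr rfl fun (i : Fin m) _ => by rw [hvsucc i]]
    nlinarith [hsum]
  obtain ⟨H, hH⟩ : ∃ H : Fin (m+1) → Fin (m+1) → ℝ,
      H = fun i j => (if i = j then 1 else 0) - 2 * v i * v j / c := ⟨_, rfl⟩
  have hHsymm : ∀ i j, H i j = H j i := by
    intro i j
    rcases eq_or_ne i j with rfl | hij
    · rfl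
    · simp only [hH]; rw [if_neg hij, if_neg (Ne.symm hij)]; ring
  have hH2 : ∀ i k, ∑ j, H i j * H k j = if i = k then 1 else 0 := by
    intro i k
    have expand : ∀ j, H i j * H k j =
        (if i = j then (1:ℝ) else 0) * (if k = j then 1 else 0)
        - (2 * v k / c) * ((if i = j then (1:ℝ) else 0) * v j)
        - (2 * v i / c) * ((if k = j then (1:ℝ) else 0) * v j)
        + ((2 * v i / c) * (2 * v k / c)) * v j ^ 2 := by
      intro j; simp only [hH]; ring
    rw [Finset.sum_congr rfl fun j _ => expand j]
    rw [Finset.sum_add_distrib, Finset.sum_sub_distrib, Finset.sum_sub_distrib,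
      ← Finset.mul_sum, ← Finset.mul_sum, ← Finset.mul_sum, hvsum]
    have e1 : ∑ j, (if i = j then (1:ℝ) else 0) * (if k = j then 1 else 0)
        = if i = k then 1 else 0 := by
      simp [ite_mul, Finset.sum_ite_eq, eq_comm]
    have e2 : ∑ j, (if i = j then (1:ℝ) else 0) * v j = v i := by
      simp [ite_mul, Finset.sum_ite_eq]
    have e3 : ∑ j, (if k = j then (1:ℝ) else 0) * v j = v k := by
      simp [ite_mul, Finset.sum_ite_eq]
    rw [e1, e2, e3]
    have h4 : (2 * v i / c) * (2 * v k / c) * c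
        = 2 * v k / c * v i + 2 * v i / c * v k := by
      field_simp; ring
    rw [h4]; ring
  have hH0 : ∀ i, H i 0 = - w i / s := by
    intro i
    simp only [hH]
    rcases eq_or_ne i 0 with rfl | hi
    · rw [if_pos rfl, hv0, hc]
      field_simp; ring
    · rw [if_neg hi, hv0, hc]
      have hvi : v i = w i := by simp [hv, hi]
      rw [hvi]
      field_simp; ring
  refine ⟨Matrix.of (fun i j => s * H i j.succ), ?_, ?_⟩
  · intro j k
    have e : ∀ i, (s * H i j.succ) * (s * H i k.succ)
        = s ^ 2 * (H j.succ i * H k.succ i) := by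
      intro i; rw [hHsymm i j.succ, hHsymm i k.succ]; ring
    simp only [Matrix.of_apply]
    rw [Finset.sum_congr rfl fun i _ => e i, ← Finset.mul_sum, hH2, hs2]
    rcases eq_or_ne j k with rfl | hjk
    · simp
    · rw [if_neg (fun h => hjk (Fin.succ_inj.mp h)), if_neg hjk]; ring
  · intro i k
    simp only [Matrix.of_apply]
    have e : ∀ j : Fin m, (s * H i j.succ) * (s * H k j.succ)
        = s ^ 2 * (H i j.succ * H k j.succ) := fun j => by ring
    rw [Finset.sum_congr rfl fun j _ => e j, ← Finset.mul_sum]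
    have key : ∑ j : Fin m, H i j.succ * H k j.succ
        = (if i = k then 1 else 0) - H i 0 * H k 0 := by
      have h := hH2 i k
      rw [Fin.sum_univ_succ] at h
      linarith
    rw [key, hH0 i, hH0 k, hs2]
    have h5 : lam * ((-w i / s) * (-w k / s)) = w i * w k * (lam / s ^ 2) := by
      ring
    rw [mul_sub, h5, hs2, div_self hlam.ne']
    split_ifs <;> ring

/-- (Special case of Schur–Horn.)  Given `λ ≥ 0` and `d ∈ ℝⁿ` with
`0 ≤ dᵢ ≤ λ` and `Σ dᵢ = (n−1)λ`, there is a complex `n × (n−1)` matrix `W` with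
`W*W = λ·I_{n−1}` and `WW* = λ·Iₙ − wwᵀ`, where `wᵢ = √(λ − dᵢ)`. -/
theorem exists_special_schur_horn_matrix (n : ℕ) (hn : 2 ≤ n)
    (lam : ℝ) (hlam : 0 ≤ lam) (d : Fin n → ℝ)
    (hd : ∀ i, 0 ≤ d i ∧ d i ≤ lam)
    (hsum : ∑ i, d i = ((n : ℝ) - 1) * lam) :
    ∃ W : Matrix (Fin n) (Fin (n - 1)) ℂ,
      Wᴴ * W = (lam : ℂ) • (1 : Matrix (Fin (n - 1)) (Fin (n - 1)) ℂ) ∧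
      W * Wᴴ = (lam : ℂ) • (1 : Matrix (Fin n) (Fin n) ℂ)
        - Matrix.of (fun i j =>
            ((Real.sqrt (lam - d i) * Real.sqrt (lam - d j) : ℝ) : ℂ)) := by
  obtain ⟨m, rfl⟩ : ∃ m, n = m + 1 := ⟨n - 1, by omega⟩
  rcases hlam.lt_or_eq with hpos | hzero
  · -- lam > 0
    set w : Fin (m+1) → ℝ := fun i => Real.sqrt (lam - d i) with hwdef
    have hq : ∀ i, w i ^ 2 = lam - d i := fun i =>
      Real.sq_sqrt (by linarith [(hd i).2])
    have hsumw : ∑ i, w i ^ 2 = lam := by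
      rw [Finset.sum_congr rfl fun i _ => hq i, Finset.sum_sub_distrib,
        Finset.sum_const, Finset.card_univ, Fintype.card_fin, nsmul_eq_mul, hsum]
      push_cast
      ring
    obtain ⟨Wr, h1, h2⟩ := exists_real_W m lam hpos w (fun i => Real.sqrt_nonneg _) hsumw
    refine ⟨Matrix.of fun i (j : Fin m) => ((Wr i j : ℝ) : ℂ), ?_, ?_⟩
    · ext j k
      have : (((Matrix.of fun i (j : Fin m) => ((Wr i j : ℝ) : ℂ))ᴴ *
          Matrix.of fun i (j : Fin m) => ((Wr i j : ℝ) : ℂ)) j k)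
          = ((∑ i, Wr i j * Wr i k : ℝ) : ℂ) := by
        simp [Matrix.mul_apply, Matrix.conjTranspose_apply, Complex.conj_ofReal]
      refine this.trans ?_
      rw [h1 j k]
      simp only [Matrix.smul_apply, Matrix.one_apply, smul_eq_mul]
      split_ifs <;> simp
    · ext i k
      have : ((Matrix.of fun i (j : Fin m) => ((Wr i j : ℝ) : ℂ)) *
          (Matrix.of fun i (j : Fin m) => ((Wr i j : ℝ) : ℂ))ᴴ) i k
          = ((∑ j, Wr i j * Wr k j : ℝ) : ℂ) := by
        simp [Matrix.mul_apply, Matrix.conjTranspose_apply, Complex.conj_ofReal]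
      refine this.trans ?_
      rw [h2 i k]
      simp only [Matrix.sub_apply, Matrix.smul_apply, Matrix.one_apply,
        Matrix.of_apply, hwdef]
      push_cast
      split_ifs <;> simp
  · -- lam = 0
    refine ⟨0, ?_, ?_⟩
    · simp [← hzero]
    · have hd0 : ∀ i, d i = 0 := fun i => le_antisymm (by rw [hzero]; exact (hd i).2) (hd i).1
      ext i k
      simp [← hzero, hd0]

end NonFreePaper
end
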